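/- The volumes of the six simplices Δ₁, …, Δ₆ (as defined by the vertex sets of the triangulation of P₁¹) are respectively Vol(Δ₁) = (1/9)·(2/4³)·(1/6!), Vol(Δ₂) = (1/9)·(1/4²)·(1/6!), Vol(Δ₃) = (1/9)·(2/4²)·(1/6!), Vol(Δ₄) = (1/9)·(1/4²)·(1/6!), Vol(Δ₅) = (1/9)·(1/4²)·(1/6!), Vol(Δ₆) = (1/9)·(2/4³)·(1/6!), and their sum equals 1/17280. -/

import Mathlib

/-!
A simplex with one vertex at the origin and the others at `v₁, …, vₙ` is the image of the
corner simplex `{x | 0 ≤ x, ∑ xᵢ ≤ 1}` under the linear map `x ↦ ∑ xᵢ • vᵢ`, so its volume is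
`|det (v₁, …, vₙ)|` times that of the corner simplex. The latter is `1 / n!`: slicing along the
first coordinate, the slice at height `t ∈ [0, 1)` is the `(1 - t)`-dilate of the corner simplex
one dimension down, and `∫₀¹ (1 - t)ⁿ dt = 1 / (n + 1)`. Every `Δₖ` has the vertex `O`, so its
volume is `|det| / 6!` for its six other vertices, and these determinants are `±1/288`, `±1/144`
and `±1/72`.
-/

open MeasureTheory

noncomputable section

def vO : Fin 6 → ℝ := ![0, 0, 0, 0, 0, 0]
def vP31 : Fin 6 → ℝ := ![0, 0, 1/2, 0, 0, 0]
def vQ3231 : Fin 6 → ℝ := ![0, 0, 1/2, 0, 1/2, 0]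
def vQ2321 : Fin 6 → ℝ := ![0, 1/2, 0, 0, 0, 1/2]
def vQ1213 : Fin 6 → ℝ := ![1/2, 0, 0, 1/2, 0, 0]
def vT3113 : Fin 6 → ℝ := ![0, 0, 1/3, 1/3, 0, 0]
def vT2112 : Fin 6 → ℝ := ![1/3, 0, 0, 0, 0, 1/3]
def vR1 : Fin 6 → ℝ := ![1/3, 1/3, 1/3, 0, 0, 0]
def vK2131 : Fin 6 → ℝ := ![0, 0, 1/4, 0, 0, 1/4]
def vV1231 : Fin 6 → ℝ := ![1/2, 0, 1/4, 0, 0, 0]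
def vV3123 : Fin 6 → ℝ := ![0, 1/4, 1/2, 0, 0, 0]

/-- The six simplices `Δ₁, …, Δ₆` of the triangulation of `P₁¹`. -/
noncomputable def Delta1 : Set (Fin 6 → ℝ) :=
  convexHull ℝ {vO, vP31, vQ3231, vQ2321, vT3113, vT2112, vK2131}
noncomputable def Delta2 : Set (Fin 6 → ℝ) :=
  convexHull ℝ {vO, vP31, vQ3231, vQ2321, vT3113, vT2112, vQ1213}
noncomputable def Delta3 : Set (Fin 6 → ℝ) :=
  convexHull ℝ {vO, vP31, vQ3231, vQ2321, vR1, vT2112, vQ1213}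
noncomputable def Delta4 : Set (Fin 6 → ℝ) :=
  convexHull ℝ {vO, vP31, vQ3231, vQ2321, vT3113, vR1, vQ1213}
noncomputable def Delta5 : Set (Fin 6 → ℝ) :=
  convexHull ℝ {vO, vP31, vQ3231, vV1231, vR1, vT2112, vQ1213}
noncomputable def Delta6 : Set (Fin 6 → ℝ) :=
  convexHull ℝ {vO, vP31, vQ3231, vQ2321, vT3113, vR1, vV3123}

noncomputable def Deltas : Fin 6 → Set (Fin 6 → ℝ) :=
  ![Delta1, Delta2, Delta3, Delta4, Delta5, Delta6]

open Set Pointwise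
open scoped ENNReal Nat

def cornerSimplex (n : ℕ) : Set (Fin n → ℝ) := {x | (∀ i, 0 ≤ x i) ∧ ∑ i, x i ≤ 1}

theorem convex_cornerSimplex (n : ℕ) : Convex ℝ (cornerSimplex n) := by
  rintro x ⟨hx0, hx1⟩ y ⟨hy0, hy1⟩ a b ha hb hab
  refine ⟨fun i => add_nonneg (mul_nonneg ha (hx0 i)) (mul_nonneg hb (hy0 i)), ?_⟩
  simp only [Pi.add_apply, Pi.smul_apply, smul_eq_mul, Finset.sum_add_distrib, ← Finset.mul_sum]
  nlinarith

theorem measurableSet_cornerSimplex (n : ℕ) : MeasurableSet (cornerSimplex n) := by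
  rw [cornerSimplex, ofPred_and, ofPred_forall]
  exact (MeasurableSet.iInter fun i =>
      measurableSet_le measurable_const (measurable_pi_apply i)).inter
    (measurableSet_le (Finset.measurable_sum _ fun i _ => measurable_pi_apply i)
      measurable_const)

theorem cons_mem_cornerSimplex_succ_iff {n : ℕ} {t : ℝ} {y : Fin n → ℝ} :
    Fin.cons t y ∈ cornerSimplex (n + 1) ↔
      0 ≤ t ∧ (∀ i, 0 ≤ y i) ∧ ∑ i, y i ≤ 1 - t := by
  simp only [cornerSimplex, mem_ofPred_eq, Fin.forall_fin_succ, Fin.sum_univ_succ, Fin.cons_zero,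
    Fin.cons_succ, and_assoc]
  constructor <;> rintro ⟨h1, h2, h3⟩ <;> exact ⟨h1, h2, by linarith⟩

theorem setOf_cons_mem_cornerSimplex_succ {n : ℕ} {t : ℝ} (ht₀ : 0 ≤ t) (ht₁ : t < 1) :
    {y : Fin n → ℝ | Fin.cons t y ∈ cornerSimplex (n + 1)} = (1 - t) • cornerSimplex n := by
  have hr : 0 < 1 - t := by linarith
  ext y
  rw [mem_smul_set_iff_inv_smul_mem₀ hr.ne', mem_ofPred_eq, cons_mem_cornerSimplex_succ_iff]
  simp only [cornerSimplex, mem_ofPred_eq, Pi.smul_apply, smul_eq_mul, ← Finset.mul_sum,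
    inv_mul_le_iff₀ hr, mul_one, ht₀, true_and]
  refine and_congr_left' (forall_congr' fun i => ?_)
  rw [mul_nonneg_iff_of_pos_left (inv_pos.2 hr)]

theorem setOf_cons_mem_cornerSimplex_succ_eq_empty {n : ℕ} {t : ℝ} (ht : t < 0 ∨ 1 < t) :
    {y : Fin n → ℝ | Fin.cons t y ∈ cornerSimplex (n + 1)} = ∅ := by
  refine eq_empty_of_forall_notMem fun y hy => ?_
  obtain ⟨ht₀, hy₀, hy₁⟩ := cons_mem_cornerSimplex_succ_iff.1 hy
  have : 0 ≤ ∑ i, y i := Finset.sum_nonneg fun i _ => hy₀ i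
  rcases ht with ht | ht <;> linarith

theorem integral_one_sub_pow (n : ℕ) : ∫ t in (0 : ℝ)..1, (1 - t) ^ n = 1 / (n + 1) := by
  simp [intervalIntegral.integral_comp_sub_left fun t : ℝ => t ^ n]

theorem volume_setOf_cons_mem_cornerSimplex_succ (n : ℕ) :
    ∀ᵐ t : ℝ, volume {y : Fin n → ℝ | Fin.cons t y ∈ cornerSimplex (n + 1)} =
      (Ico 0 1).indicator (fun t => ENNReal.ofReal ((1 - t) ^ n) * volume (cornerSimplex n)) t := by
  filter_upwards [measure_eq_zero_iff_ae_notMem.1 (measure_singleton (1 : ℝ))] with t ht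
  rcases lt_or_ge t 0 with ht₀ | ht₀
  · rw [setOf_cons_mem_cornerSimplex_succ_eq_empty (.inl ht₀),
      indicator_of_notMem fun h => ht₀.not_ge h.1, measure_empty]
  rcases lt_or_gt_of_ne (show t ≠ 1 from ht) with ht₁ | ht₁
  · rw [setOf_cons_mem_cornerSimplex_succ ht₀ ht₁,
      indicator_of_mem (show t ∈ Ico (0 : ℝ) 1 from ⟨ht₀, ht₁⟩), Measure.addHaar_smul,
      Module.finrank_fin_fun, abs_of_nonneg (pow_nonneg (sub_nonneg.2 ht₁.le) _)]
  · rw [setOf_cons_mem_cornerSimplex_succ_eq_empty (.inr ht₁),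
      indicator_of_notMem fun h => ht₁.not_gt h.2, measure_empty]

theorem volume_cornerSimplex (n : ℕ) : volume (cornerSimplex n) = (n ! : ℝ≥0∞)⁻¹ := by
  induction n with
  | zero =>
    rw [show cornerSimplex 0 = univ.pi fun _ => univ by ext; simp [cornerSimplex], volume_pi_pi]
    simp
  | succ n ih =>
    let e := (MeasurableEquiv.piFinSuccAbove (fun _ : Fin (n + 1) => ℝ) 0).symm
    have he : MeasurePreserving e := (volume_preserving_piFinSuccAbove _ 0).symm
    have hslice (t : ℝ) : Prod.mk t ⁻¹' (e ⁻¹' cornerSimplex (n + 1)) =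
        {y | Fin.cons t y ∈ cornerSimplex (n + 1)} := by
      ext y
      simp [e, Fin.consEquiv]
    rw [← he.measure_preimage_equiv, Measure.volume_eq_prod,
      Measure.prod_apply ((measurableSet_cornerSimplex _).preimage e.measurable)]
    simp_rw [hslice]
    rw [lintegral_congr_ae (volume_setOf_cons_mem_cornerSimplex_succ n),
      lintegral_indicator measurableSet_Ico, lintegral_mul_const _ (by fun_prop), ih,
      ← ofReal_integral_eq_lintegral_ofReal, integral_Ico_eq_integral_Ioo,
      ← integral_Ioc_eq_integral_Ioo, ← intervalIntegral.integral_of_le zero_le_one,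
      integral_one_sub_pow]
    · rw [Nat.factorial_succ, Nat.cast_mul, ENNReal.mul_inv (by simp) (by simp), one_div,
        ENNReal.ofReal_inv_of_pos (by positivity)]
      norm_cast
    · exact (by fun_prop : Continuous fun t : ℝ => (1 - t) ^ n).integrableOn_Icc.mono_set
        Ico_subset_Icc_self
    · filter_upwards [self_mem_ae_restrict measurableSet_Ico] with t ht
      exact pow_nonneg (sub_nonneg.2 ht.2.le) n

theorem convexHull_insert_zero_range_eq_image {E : Type*} [AddCommGroup E] [Module ℝ E] {n : ℕ}
    (v : Fin n → E) :
    convexHull ℝ (insert 0 (range v)) = Fintype.linearCombination ℝ v '' cornerSimplex n := by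
  classical
  apply Subset.antisymm
  · refine convexHull_min
      (insert_subset_iff.2 ⟨⟨0, ⟨fun _ => le_rfl, by simp⟩, map_zero _⟩, ?_⟩)
      ((convex_cornerSimplex n).linear_image _)
    rintro _ ⟨i, rfl⟩
    refine ⟨Pi.single i 1, ⟨fun j => ?_, by simp⟩,
      by simp [Fintype.linearCombination_apply_single]⟩
    rw [Pi.single_apply]
    split_ifs <;> norm_num
  · rintro _ ⟨x, ⟨hx₀, hx₁⟩, rfl⟩
    have := (convex_convexHull ℝ (insert 0 (range v))).sum_mem (t := Finset.univ)
      (w := Fin.cons (1 - ∑ i, x i) x) (z := Fin.cons 0 v) ?_ ?_ ?_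
    · simpa [Fin.sum_univ_succ, Fintype.linearCombination_apply] using this
    · intro i _
      cases i using Fin.cases with
      | zero => simpa using hx₁
      | succ i => simpa using hx₀ i
    · simp [Fin.sum_univ_succ]
    · intro i _
      cases i using Fin.cases with
      | zero => exact subset_convexHull ℝ _ (mem_insert 0 _)
      | succ i => exact subset_convexHull ℝ _ (mem_insert_of_mem 0 (mem_range_self i))

theorem det_fintypeLinearCombination {ι : Type*} [Fintype ι] [DecidableEq ι]
    (v : ι → ι → ℝ) :
    LinearMap.det (Fintype.linearCombination ℝ v) = (Matrix.of v).det := by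
  rw [show Fintype.linearCombination ℝ v = Matrix.toLin' (Matrix.of v).transpose by
    ext i j; simp [Fintype.linearCombination_apply_single, Matrix.mulVec_single]]
  rw [LinearMap.det_toLin', Matrix.det_transpose]

theorem volume_convexHull_insert_zero_range {n : ℕ} (v : Fin n → Fin n → ℝ) :
    volume (convexHull ℝ (insert 0 (range v))) =
      ENNReal.ofReal |(Matrix.of v).det| * (n ! : ℝ≥0∞)⁻¹ := by
  rw [convexHull_insert_zero_range_eq_image, Measure.addHaar_image_linearMap,
    det_fintypeLinearCombination, volume_cornerSimplex]

theorem volume_convexHull_vO_insert (a b c d e f : Fin 6 → ℝ) :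
    volume (convexHull ℝ {vO, a, b, c, d, e, f}) =
      ENNReal.ofReal |(Matrix.of ![a, b, c, d, e, f]).det| * (6 ! : ℝ≥0∞)⁻¹ := by
  have hO : vO = 0 := by ext i; fin_cases i <;> rfl
  rw [hO, ← volume_convexHull_insert_zero_range]
  simp only [Matrix.range_cons, Matrix.range_empty, union_empty, singleton_union]

theorem det_Delta1 :
    (Matrix.of ![vP31, vQ3231, vQ2321, vT3113, vT2112, vK2131]).det = -1 / 288 := by
  simp [Matrix.det_succ_column_zero, Fin.sum_univ_succ, Fin.succAbove,
    vP31, vQ3231, vQ2321, vT3113, vT2112, vK2131]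
  norm_num

theorem det_Delta2 :
    (Matrix.of ![vP31, vQ3231, vQ2321, vT3113, vT2112, vQ1213]).det = 1 / 144 := by
  simp [Matrix.det_succ_column_zero, Fin.sum_univ_succ, Fin.succAbove,
    vP31, vQ3231, vQ2321, vT3113, vT2112, vQ1213]
  norm_num

theorem det_Delta3 :
    (Matrix.of ![vP31, vQ3231, vQ2321, vR1, vT2112, vQ1213]).det = -1 / 72 := by
  simp [Matrix.det_succ_column_zero, Fin.sum_univ_succ, Fin.succAbove,
    vP31, vQ3231, vQ2321, vR1, vT2112, vQ1213]
  norm_num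

theorem det_Delta4 :
    (Matrix.of ![vP31, vQ3231, vQ2321, vT3113, vR1, vQ1213]).det = -1 / 144 := by
  simp [Matrix.det_succ_column_zero, Fin.sum_univ_succ, Fin.succAbove,
    vP31, vQ3231, vQ2321, vT3113, vR1, vQ1213]
  norm_num

theorem det_Delta5 :
    (Matrix.of ![vP31, vQ3231, vV1231, vR1, vT2112, vQ1213]).det = 1 / 144 := by
  simp [Matrix.det_succ_column_zero, Fin.sum_univ_succ, Fin.succAbove,
    vP31, vQ3231, vV1231, vR1, vT2112, vQ1213]
  norm_num

theorem det_Delta6 :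
    (Matrix.of ![vP31, vQ3231, vQ2321, vT3113, vR1, vV3123]).det = 1 / 288 := by
  simp [Matrix.det_succ_column_zero, Fin.sum_univ_succ, Fin.succAbove,
    vP31, vQ3231, vQ2321, vT3113, vR1, vV3123]
  norm_num

theorem volume_Delta1 : volume Delta1 = 1 / 9 * (2 / 4 ^ 3) * (1 / 6 !) := by
  rw [Delta1, volume_convexHull_vO_insert, det_Delta1, one_div (6 ! : ℝ≥0∞),
    show |(-1 / 288 : ℝ)| = 1 / 9 * (2 / 4 ^ 3) by norm_num]
  simp [ENNReal.ofReal_mul, ENNReal.ofReal_div_of_pos]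

theorem volume_Delta2 : volume Delta2 = 1 / 9 * (1 / 4 ^ 2) * (1 / 6 !) := by
  rw [Delta2, volume_convexHull_vO_insert, det_Delta2, one_div (6 ! : ℝ≥0∞),
    show |(1 / 144 : ℝ)| = 1 / 9 * (1 / 4 ^ 2) by norm_num]
  simp [ENNReal.ofReal_mul]

theorem volume_Delta3 : volume Delta3 = 1 / 9 * (2 / 4 ^ 2) * (1 / 6 !) := by
  rw [Delta3, volume_convexHull_vO_insert, det_Delta3, one_div (6 ! : ℝ≥0∞),
    show |(-1 / 72 : ℝ)| = 1 / 9 * (2 / 4 ^ 2) by norm_num]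
  simp [ENNReal.ofReal_mul, ENNReal.ofReal_div_of_pos]

theorem volume_Delta4 : volume Delta4 = 1 / 9 * (1 / 4 ^ 2) * (1 / 6 !) := by
  rw [Delta4, volume_convexHull_vO_insert, det_Delta4, one_div (6 ! : ℝ≥0∞),
    show |(-1 / 144 : ℝ)| = 1 / 9 * (1 / 4 ^ 2) by norm_num]
  simp [ENNReal.ofReal_mul]

theorem volume_Delta5 : volume Delta5 = 1 / 9 * (1 / 4 ^ 2) * (1 / 6 !) := by
  rw [Delta5, volume_convexHull_vO_insert, det_Delta5, one_div (6 ! : ℝ≥0∞),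
    show |(1 / 144 : ℝ)| = 1 / 9 * (1 / 4 ^ 2) by norm_num]
  simp [ENNReal.ofReal_mul]

theorem volume_Delta6 : volume Delta6 = 1 / 9 * (2 / 4 ^ 3) * (1 / 6 !) := by
  rw [Delta6, volume_convexHull_vO_insert, det_Delta6, one_div (6 ! : ℝ≥0∞),
    show |(1 / 288 : ℝ)| = 1 / 9 * (2 / 4 ^ 3) by norm_num]
  simp [ENNReal.ofReal_mul, ENNReal.ofReal_div_of_pos]

/-- The volumes of the six simplices of the triangulation of `P₁¹`, and
their sum `1/17280`. -/
theorem volume_simplices :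
    volume Delta1 = (1 / 9) * (2 / 4 ^ 3) * (1 / Nat.factorial 6) ∧
    volume Delta2 = (1 / 9) * (1 / 4 ^ 2) * (1 / Nat.factorial 6) ∧
    volume Delta3 = (1 / 9) * (2 / 4 ^ 2) * (1 / Nat.factorial 6) ∧
    volume Delta4 = (1 / 9) * (1 / 4 ^ 2) * (1 / Nat.factorial 6) ∧
    volume Delta5 = (1 / 9) * (1 / 4 ^ 2) * (1 / Nat.factorial 6) ∧
    volume Delta6 = (1 / 9) * (2 / 4 ^ 3) * (1 / Nat.factorial 6) ∧
    ∑ i : Fin 6, volume (Deltas i) = 1 / 17280 := by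
  refine ⟨volume_Delta1, volume_Delta2, volume_Delta3, volume_Delta4, volume_Delta5,
    volume_Delta6, ?_⟩
  simp only [Fin.sum_univ_six, Deltas, Matrix.cons_val, volume_Delta1, volume_Delta2,
    volume_Delta3, volume_Delta4, volume_Delta5, volume_Delta6]
  rw [← ENNReal.toReal_eq_toReal_iff' (by finiteness) (by finiteness)]
  simp [ENNReal.toReal_add, ENNReal.mul_eq_top, ENNReal.div_eq_top, ENNReal.add_eq_top,
    Nat.factorial]
  norm_num
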